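/- Let R be a commutative Artinian ring that admits an injective ring homomorphism into a commutative local ring. Then R is local. -/

import Mathlib

/-!
An Artinian ring with two distinct maximal ideals has an idempotent lying in one but not the
other (it is a finite product of its localizations), hence an idempotent other than `0` and `1`.
An injective ring homomorphism carries it to a nontrivial idempotent, but a local ring has none.
-/

theorem IsLocalRing.isIdempotentElem_iff {S : Type*} [CommRing S] [IsLocalRing S] {e : S} :
    IsIdempotentElem e ↔ e = 0 ∨ e = 1 := by
  refine ⟨fun he => ?_, by rintro (rfl | rfl) <;> simp [IsIdempotentElem]⟩
  rcases IsLocalRing.isUnit_or_isUnit_one_sub_self e with hunit | hunit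
  · exact .inr (hunit.mul_left_cancel (by rw [he.eq, mul_one]))
  · exact .inl (hunit.mul_left_cancel (by rw [sub_mul, one_mul, he.eq, sub_self, mul_zero]))

theorem IsArtinianRing.isLocalRing_of_isIdempotentElem {R : Type*} [CommRing R]
    [IsArtinianRing R] [Nontrivial R] (h : ∀ e : R, IsIdempotentElem e → e = 0 ∨ e = 1) :
    IsLocalRing R := by
  obtain ⟨m, hm⟩ := Ideal.exists_maximal R
  refine IsLocalRing.of_unique_max_ideal ⟨m, hm, fun q hq => ?_⟩
  by_contra hqm
  obtain ⟨e, he_notMem, he_idem, he_mem⟩ := IsArtinianRing.exists_not_mem_forall_mem_of_ne m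
  rcases h e he_idem with rfl | rfl
  · exact he_notMem m.zero_mem
  · exact hq.ne_top ((Ideal.eq_top_iff_one q).mpr (he_mem q hq.isPrime hqm))

/-- A commutative Artinian ring that admits an injective ring homomorphism
into a commutative local ring is local. -/
theorem stmt_0 (R S : Type*) [CommRing R] [IsArtinianRing R] [CommRing S] [IsLocalRing S]
    (f : R →+* S) (hf : Function.Injective f) : IsLocalRing R := by
  have : Nontrivial R := f.domain_nontrivial
  refine IsArtinianRing.isLocalRing_of_isIdempotentElem fun e he => ?_
  rcases IsLocalRing.isIdempotentElem_iff.mp (he.map f) with h | h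
  · exact .inl (hf (by rw [h, map_zero]))
  · exact .inr (hf (by rw [h, map_one]))
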